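/- Let Φ have coherence μ and let θ = μ̄² if Φ is coherence-invariant and θ = μ̄²_max otherwise; assume k < N/2 − 1. Let a ∈ (0,1) and β > 0 be constants and let 0 < α < β·log₂ e. If μ⁴ ≤ (1−a)²α³/(32βk) and kθ ≤ aα, then for a uniformly random pair (I, j) consisting of a k-subset I = {i₁,…,i_k} of {1,…,N} and an index j ∉ I, the probability that Σ_{l=1}^k μ_{i_l,j}² ≥ α is at most 2·e^{−β/α}. -/

import Mathlib

/-!
Fix the column `j`. For a uniformly random `k`-subset `I` of the other indices,
`Σ_{i ∈ I} μ_ij²` is a sum of `k` draws without replacement from weights in `[0, μ²]` whose mean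
`(1/(N-1)) Σ_{i ≠ j} μ_ij²` is at most `θ`, so `k` times the mean is at most `aα`. Removing one
element of the subset gives, by induction on `k`, the moment generating function bound
`E exp (L Σ_{i ∈ I} v_i) ≤ exp (k (L · mean + L² μ⁴))` for `0 ≤ L ≤ μ⁻²`, as for independent draws.
Markov's inequality with the tilt `L = t / (2kμ⁴)`, `t = (1 - a)α`, bounds the probability of
`Σ ≥ α` by `exp (-t² / (4kμ⁴))`, which is at most `exp (-β/α)` by the assumption on `μ⁴`.
Averaging over `j` gives the claim.
-/

open Finset Matrix

open scoped Classical

noncomputable section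

/-- The ℓ₂→ℓ₂ operator (spectral) norm of a real matrix. -/
def specNorm {α β : Type*} [Fintype α] [Fintype β] (A : Matrix α β ℝ) : ℝ :=
  sSup {t : ℝ | ∃ x : β → ℝ, (∑ j, x j ^ 2) ≤ 1 ∧ t = Real.sqrt (∑ i, (∑ j, A i j * x j) ^ 2)}

variable {m N : ℕ}

/-- The submatrix of `Φ` formed by the columns indexed by `I`. -/
def colSub (Φ : Matrix (Fin m) (Fin N) ℝ) (I : Finset (Fin N)) :
    Matrix (Fin m) {i // i ∈ I} ℝ :=
  Matrix.of fun r j => Φ r (j : Fin N)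

/-- The Gram matrix `Φ_Iᵀ Φ_I`. -/
def gram (Φ : Matrix (Fin m) (Fin N) ℝ) (I : Finset (Fin N)) :
    Matrix {i // i ∈ I} {i // i ∈ I} ℝ :=
  (colSub Φ I)ᵀ * colSub Φ I

/-- `‖Φ_Iᵀ φ_i‖₂²`. -/
def sincSq (Φ : Matrix (Fin m) (Fin N) ℝ) (I : Finset (Fin N)) (i : Fin N) : ℝ :=
  ∑ j ∈ I, (∑ r, Φ r j * Φ r i) ^ 2

/-- All columns of `Φ` have unit ℓ₂ norm. -/
def unitCols (Φ : Matrix (Fin m) (Fin N) ℝ) : Prop :=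
  ∀ j, (∑ r, Φ r j ^ 2) = 1

/-- `Φ` is `(k,δ,ε)`-StRIP: a uniformly random `k`-subset `I` satisfies
`‖Φ_Iᵀ Φ_I − Id‖ ≤ δ` with probability at least `1 − ε`. -/
def StRIP (Φ : Matrix (Fin m) (Fin N) ℝ) (k : ℕ) (δ ε : ℝ) : Prop :=
  (1 - ε) * ((Finset.powersetCard k (univ : Finset (Fin N))).card : ℝ) ≤
    (((Finset.powersetCard k (univ : Finset (Fin N))).filter
        fun I => specNorm (gram Φ I - 1) ≤ δ).card : ℝ)

/-- `Φ` is `(k,α,ε)`-SINC: a uniformly random `k`-subset `I` satisfies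
`max_{i ∉ I} ‖Φ_Iᵀ φ_i‖₂² ≤ α` with probability at least `1 − ε`. -/
def SINC (Φ : Matrix (Fin m) (Fin N) ℝ) (k : ℕ) (α ε : ℝ) : Prop :=
  (1 - ε) * ((Finset.powersetCard k (univ : Finset (Fin N))).card : ℝ) ≤
    (((Finset.powersetCard k (univ : Finset (Fin N))).filter
        fun I => ∀ i ∉ I, sincSq Φ I i ≤ α).card : ℝ)

/-- ℓ₁ norm on `ℝ^N`. -/
def l1 (x : Fin N → ℝ) : ℝ := ∑ i, |x i|

/-- ℓ₂ norm on `ℝ^N`. -/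
def l2 (x : Fin N → ℝ) : ℝ := Real.sqrt (∑ i, x i ^ 2)

/-- Restriction `x_I` of a vector to the coordinates in `I` (zero outside `I`). -/
def restr (I : Finset (Fin N)) (x : Fin N → ℝ) : Fin N → ℝ :=
  fun i => if i ∈ I then x i else 0

/-- `x` is `k`-sparse. -/
def kSparse (k : ℕ) (x : Fin N → ℝ) : Prop :=
  ((univ : Finset (Fin N)).filter fun i => x i ≠ 0).card ≤ k

/-- `min_{x' k-sparse} ‖x − x′‖₁`. -/
def bestK (k : ℕ) (x : Fin N → ℝ) : ℝ :=
  sInf {t : ℝ | ∃ x' : Fin N → ℝ, kSparse k x' ∧ t = l1 (x - x')}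

/-- `xh` is a (noiseless) Basis Pursuit solution for the data `y`. -/
def isBPsol (Φ : Matrix (Fin m) (Fin N) ℝ) (y : Fin m → ℝ) (xh : Fin N → ℝ) : Prop :=
  Φ.mulVec xh = y ∧ ∀ u : Fin N → ℝ, Φ.mulVec u = y → l1 xh ≤ l1 u

/-- Inner product of columns `i` and `j` of `Φ`. -/
def ip (Φ : Matrix (Fin m) (Fin N) ℝ) (i j : Fin N) : ℝ := ∑ r, Φ r i * Φ r j

/-- Mean square coherence `μ̄² = (1/(N(N−1))) Σ_{i≠j} μ_ij²`. -/
def mu2bar (Φ : Matrix (Fin m) (Fin N) ℝ) : ℝ :=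
  (∑ i, ∑ j ∈ (univ : Finset (Fin N)).erase i, (ip Φ i j) ^ 2) / ((N : ℝ) * ((N : ℝ) - 1))

/-- Maximum average square coherence `μ̄²_max = max_j (1/(N−1)) Σ_{i≠j} μ_ij²`. -/
def mu2max (Φ : Matrix (Fin m) (Fin N) ℝ) : ℝ :=
  sSup {t : ℝ | ∃ j : Fin N,
    t = (∑ i ∈ (univ : Finset (Fin N)).erase j, (ip Φ i j) ^ 2) / ((N : ℝ) - 1)}

/-- `Φ` is coherence-invariant: the multiset `{μ_ij : j ≠ i}` does not depend on `i`. -/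
def CoherenceInvariant (Φ : Matrix (Fin m) (Fin N) ℝ) : Prop :=
  ∀ i i' : Fin N,
    Multiset.map (fun j => |ip Φ i j|) ((univ : Finset (Fin N)).erase i).val =
    Multiset.map (fun j => |ip Φ i' j|) ((univ : Finset (Fin N)).erase i').val

/-- The set of pairs `(I, j)` with `I` a `k`-subset of `[N]` and `j ∉ I`. -/
def pairsFinset (N k : ℕ) : Finset (Finset (Fin N) × Fin N) :=
  (Finset.powersetCard k (univ : Finset (Fin N)) ×ˢ (univ : Finset (Fin N))).filter
    fun p => p.2 ∉ p.1

theorem choose_sub_one_mul_exp_mul_eq {n k : ℕ} (hkn : k + 1 ≤ n) (x y : ℝ) :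
    ((n - 1).choose k : ℝ) * Real.exp (k * (x / (n - 1) + y)) *
        (n * Real.exp ((1 - k / ((n : ℝ) - 1)) * x / n + y)) =
      ((k : ℝ) + 1) * (n.choose (k + 1) * Real.exp ((k + 1 : ℕ) * (x / n + y))) := by
  have hchoose : (n : ℝ) * (n - 1).choose k = (k + 1) * n.choose (k + 1) := by
    have h := Nat.add_one_mul_choose_eq (n - 1) k
    rw [Nat.sub_add_cancel (by omega)] at h
    exact_mod_cast h.trans (mul_comm _ _)
  have hexp : k * (x / (n - 1) + y) + ((1 - k / ((n : ℝ) - 1)) * x / n + y) =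
      (k + 1 : ℕ) * (x / n + y) := by
    rcases Nat.eq_zero_or_pos k with rfl | hk
    · simp
    · have hkn' : (k : ℝ) + 1 ≤ n := by exact_mod_cast hkn
      have : (1 : ℝ) ≤ k := by exact_mod_cast hk
      have hn : (n : ℝ) - 1 ≠ 0 := by linarith
      have hn' : (n : ℝ) ≠ 0 := by linarith
      push_cast
      field_simp
      ring
  rw [← hexp, ← mul_assoc ((k : ℝ) + 1), ← hchoose, Real.exp_add (k * (x / (n - 1) + y))]
  ring

theorem card_filter_mul_exp_le_sum_exp {ι : Type*} (s : Finset ι) (f : ι → ℝ) (a : ℝ) {L : ℝ}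
    (hL : 0 ≤ L) : (#{x ∈ s | a ≤ f x} : ℝ) * Real.exp (L * a) ≤ ∑ x ∈ s, Real.exp (L * f x) := by
  rw [← nsmul_eq_mul]
  refine (card_nsmul_le_sum _ _ _ fun x hx => ?_).trans
    (sum_le_sum_of_subset_of_nonneg (filter_subset _ _) fun _ _ _ => (Real.exp_pos _).le)
  exact Real.exp_le_exp.2 (mul_le_mul_of_nonneg_left (mem_filter.1 hx).2 hL)

section SamplingWithoutReplacement

variable {ι : Type*}

theorem sum_exp_le_card_mul_exp_mean_add_sq (s : Finset ι) (y : ι → ℝ) {ε : ℝ} (hε : ε ≤ 1)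
    (hy : ∀ x ∈ s, 0 ≤ y x ∧ y x ≤ ε) :
    ∑ x ∈ s, Real.exp (y x) ≤ #s * Real.exp ((∑ x ∈ s, y x) / #s + ε ^ 2) := by
  rcases s.eq_empty_or_nonempty with rfl | hs
  · simp
  have hn : (0 : ℝ) < #s := by exact_mod_cast hs.card_pos
  set ybar := (∑ x ∈ s, y x) / #s with hybar
  have hybar0 : 0 ≤ ybar := div_nonneg (sum_nonneg fun x hx => (hy x hx).1) hn.le
  have hybarε : ybar ≤ ε := by
    rw [hybar, div_le_iff₀ hn, mul_comm, ← nsmul_eq_mul]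
    exact sum_le_card_nsmul _ _ _ fun x hx => (hy x hx).2
  have hdev : ∀ x ∈ s, Real.exp (y x) ≤ Real.exp ybar * (1 + (y x - ybar) + ε ^ 2) := by
    intro x hx
    have hd : |y x - ybar| ≤ ε :=
      abs_sub_le_iff.2 ⟨by linarith [(hy x hx).2], by linarith [(hy x hx).1]⟩
    have hsq : (y x - ybar) ^ 2 ≤ ε ^ 2 := by
      simpa only [sq_abs] using pow_le_pow_left₀ (abs_nonneg _) hd 2
    have htaylor := (abs_le.1 (Real.abs_exp_sub_one_sub_id_le (hd.trans hε))).2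
    calc Real.exp (y x) = Real.exp ybar * Real.exp (y x - ybar) := by
          rw [← Real.exp_add]; ring_nf
      _ ≤ Real.exp ybar * (1 + (y x - ybar) + ε ^ 2) := by gcongr; linarith
  have hcentered : ∑ x ∈ s, (y x - ybar) = 0 := by
    rw [sum_sub_distrib, sum_const, nsmul_eq_mul, hybar, mul_div_cancel₀ _ hn.ne', sub_self]
  calc ∑ x ∈ s, Real.exp (y x) ≤ ∑ x ∈ s, Real.exp ybar * (1 + (y x - ybar) + ε ^ 2) :=
        sum_le_sum hdev
    _ = #s * (Real.exp ybar * (1 + ε ^ 2)) := by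
      rw [← mul_sum, sum_add_distrib, sum_add_distrib, hcentered]
      simp only [sum_const, nsmul_eq_mul]
      ring
    _ ≤ #s * (Real.exp ybar * Real.exp (ε ^ 2)) := by
      gcongr; linarith [Real.add_one_le_exp (ε ^ 2)]
    _ = #s * Real.exp (ybar + ε ^ 2) := by rw [Real.exp_add]

variable [DecidableEq ι]

theorem sum_powersetCard_succ_sum_eq_sum_insert {M : Type*} [AddCommMonoid M] (s : Finset ι)
    (k : ℕ) (g : ι → Finset ι → M) :
    ∑ I ∈ s.powersetCard (k + 1), ∑ x ∈ I, g x I =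
      ∑ x ∈ s, ∑ J ∈ (s.erase x).powersetCard k, g x (insert x J) := by
  rw [sum_sigma', sum_sigma']
  refine sum_nbij' (fun p => ⟨p.2, p.1.erase p.2⟩) (fun p => ⟨insert p.1 p.2, p.1⟩)
    ?_ ?_ ?_ ?_ ?_
  · rintro ⟨I, x⟩ h
    simp only [mem_sigma, mem_powersetCard] at h ⊢
    exact ⟨h.1.1 h.2, erase_subset_erase x h.1.1, by rw [card_erase_of_mem h.2, h.1.2]; rfl⟩
  · rintro ⟨x, J⟩ h
    simp only [mem_sigma, mem_powersetCard, subset_erase] at h ⊢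
    exact ⟨⟨insert_subset h.1 h.2.1.1, by rw [card_insert_of_notMem h.2.1.2, h.2.2]⟩,
      mem_insert_self x J⟩
  · rintro ⟨I, x⟩ h
    simp only [mem_sigma] at h
    simp [insert_erase h.2]
  · rintro ⟨x, J⟩ h
    simp only [mem_sigma, mem_powersetCard, subset_erase] at h
    simp [erase_insert h.2.1.2]
  · rintro ⟨I, x⟩ h
    simp only [mem_sigma] at h
    simp [insert_erase h.2]

theorem mul_sum_powersetCard_succ_exp (v : ι → ℝ) (L : ℝ) (s : Finset ι) (k : ℕ) :
    ((k : ℝ) + 1) * ∑ I ∈ s.powersetCard (k + 1), Real.exp (L * ∑ i ∈ I, v i) =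
      ∑ x ∈ s, Real.exp (L * v x) *
        ∑ J ∈ (s.erase x).powersetCard k, Real.exp (L * ∑ i ∈ J, v i) := by
  calc _ = ∑ I ∈ s.powersetCard (k + 1), ∑ x ∈ I, Real.exp (L * ∑ i ∈ I, v i) := by
        rw [mul_sum]
        refine sum_congr rfl fun I hI => ?_
        rw [sum_const, (mem_powersetCard.1 hI).2, nsmul_eq_mul]
        push_cast; rfl
    _ = _ := sum_powersetCard_succ_sum_eq_sum_insert _ _ _
    _ = _ := by
        refine sum_congr rfl fun x _ => ?_
        rw [mul_sum]
        refine sum_congr rfl fun J hJ => ?_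
        have hxJ : x ∉ J := fun h => notMem_erase x s ((mem_powersetCard.1 hJ).1 h)
        rw [sum_insert hxJ, mul_add, Real.exp_add]

theorem sum_powersetCard_exp_le {v : ι → ℝ} {B L : ℝ} (hL : 0 ≤ L) (hLB : L * B ≤ 1) (k : ℕ)
    {s : Finset ι} (hv : ∀ x ∈ s, 0 ≤ v x ∧ v x ≤ B) :
    ∑ I ∈ s.powersetCard k, Real.exp (L * ∑ i ∈ I, v i) ≤
      (#s).choose k * Real.exp (k * (L * (∑ i ∈ s, v i) / #s + (L * B) ^ 2)) := by
  induction k generalizing s with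
  | zero => simp
  | succ k ih =>
    by_cases hks : #s < k + 1
    · simp [powersetCard_eq_empty.2 hks, Nat.choose_eq_zero_of_lt hks]
    rw [not_lt] at hks
    set n : ℝ := (s.card : ℝ)
    set S := ∑ i ∈ s, v i
    have hn1 : ((#s - 1 : ℕ) : ℝ) = n - 1 := by rw [Nat.cast_sub (by omega), Nat.cast_one]
    have hkn : (k : ℝ) ≤ n - 1 := by rw [← hn1]; exact_mod_cast Nat.le_sub_one_of_lt hks
    -- removing `x` from a `(k+1)`-subset leaves a `k`-subset of `s.erase x`, of mean weight
    -- `(S - v x) / (n - 1)`; so the weight of `x` enters the exponent with the factor `c`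
    set c : ℝ := 1 - k / (n - 1) with hc
    have hc0 : 0 ≤ c := by rw [hc, sub_nonneg]; exact div_le_one_of_le₀ hkn (by linarith)
    have hc1 : c ≤ 1 := by rw [hc, sub_le_self_iff]; exact div_nonneg k.cast_nonneg (by linarith)
    have hstep : ∀ x ∈ s, Real.exp (L * v x) *
        ∑ J ∈ (s.erase x).powersetCard k, Real.exp (L * ∑ i ∈ J, v i) ≤
        (#s - 1).choose k * Real.exp (k * (L * S / (n - 1) + (L * B) ^ 2)) *
          Real.exp (c * L * v x) := by
      intro x hx
      have h := ih (s := s.erase x) fun y hy => hv y (mem_of_mem_erase hy)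
      rw [card_erase_of_mem hx, sum_erase_eq_sub hx, hn1] at h
      calc _ ≤ Real.exp (L * v x) * ((#s - 1).choose k *
            Real.exp (k * (L * (S - v x) / (n - 1) + (L * B) ^ 2))) := by gcongr
        _ = _ := by rw [mul_left_comm, mul_assoc, ← Real.exp_add, ← Real.exp_add, hc]; ring_nf
    have hcv : ∀ x ∈ s, 0 ≤ c * L * v x ∧ c * L * v x ≤ L * B := by
      intro x hx
      obtain ⟨hv0, hvB⟩ := hv x hx
      refine ⟨by positivity, ?_⟩
      simpa using mul_le_mul (mul_le_mul_of_nonneg_right hc1 hL) hvB hv0 (by positivity)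
    refine le_of_mul_le_mul_left ?_ (show (0 : ℝ) < k + 1 by positivity)
    calc ((k : ℝ) + 1) * ∑ I ∈ s.powersetCard (k + 1), Real.exp (L * ∑ i ∈ I, v i)
        = ∑ x ∈ s, Real.exp (L * v x) *
            ∑ J ∈ (s.erase x).powersetCard k, Real.exp (L * ∑ i ∈ J, v i) :=
          mul_sum_powersetCard_succ_exp v L s k
      _ ≤ (#s - 1).choose k * Real.exp (k * (L * S / (n - 1) + (L * B) ^ 2)) *
            ∑ x ∈ s, Real.exp (c * L * v x) := by
          rw [mul_sum]; exact sum_le_sum hstep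
      _ ≤ (#s - 1).choose k * Real.exp (k * (L * S / (n - 1) + (L * B) ^ 2)) *
            (n * Real.exp (c * L * S / n + (L * B) ^ 2)) := by
          have h := sum_exp_le_card_mul_exp_mean_add_sq s _ hLB hcv
          rw [← mul_sum] at h
          gcongr
      _ = ((k : ℝ) + 1) * ((#s).choose (k + 1) *
            Real.exp ((k + 1 : ℕ) * (L * S / n + (L * B) ^ 2))) := by
          rw [mul_assoc c]
          exact choose_sub_one_mul_exp_mul_eq hks _ _

theorem card_filter_le_sum_le_choose_mul_exp {v : ι → ℝ} {B t α c : ℝ} {k : ℕ}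
    {s : Finset ι} (hv : ∀ x ∈ s, 0 ≤ v x ∧ v x ≤ B) (ht : 0 < t)
    (hmean : k * ((∑ x ∈ s, v x) / #s) ≤ α - t) (hc : 4 * c * k * B ^ 2 ≤ t ^ 2) :
    (#{I ∈ s.powersetCard k | α ≤ ∑ i ∈ I, v i} : ℝ) ≤ (#s).choose k * Real.exp (-c) := by
  set S := ∑ x ∈ s, v x
  have hS : 0 ≤ S / #s := div_nonneg (sum_nonneg fun x hx => (hv x hx).1) (Nat.cast_nonneg _)
  have hsum_le : ∀ I ∈ s.powersetCard k, ∑ i ∈ I, v i ≤ k * B := fun I hI => by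
    obtain ⟨hIs, rfl⟩ := mem_powersetCard.1 hI
    simpa using sum_le_card_nsmul I v B fun i hi => (hv i (hIs hi)).2
  by_cases hα : k * B < α
  · rw [filter_false_of_mem fun I hI => not_le.2 ((hsum_le I hI).trans_lt hα)]
    simp only [card_empty, Nat.cast_zero]
    positivity
  rw [not_lt] at hα
  have hkB : 0 < k * B := by nlinarith
  obtain ⟨hk, hB⟩ := (pos_and_pos_or_neg_and_neg_of_mul_pos hkB).resolve_right
    fun h => (k.cast_nonneg : (0 : ℝ) ≤ k).not_gt h.1
  -- the tilt minimising the exponent `-L t + k (L B)²`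
  set L := t / (2 * k * B ^ 2) with hL
  have hL0 : 0 ≤ L := by positivity
  have hLB : L * B ≤ 1 := by
    rw [hL, div_mul_eq_mul_div, div_le_one (by positivity)]
    nlinarith
  have hexp : k * (L * S / #s + (L * B) ^ 2) - L * α ≤ -c := by
    have htilt : -L * t + k * (L * B) ^ 2 = -(t ^ 2 / (4 * k * B ^ 2)) := by
      rw [hL]; field_simp; ring
    have hc' : c ≤ t ^ 2 / (4 * k * B ^ 2) := by
      rw [le_div_iff₀ (by positivity)]; linarith
    have hmean' : k * (L * S / #s) ≤ L * (α - t) := by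
      rw [show k * (L * S / #s) = L * (k * (S / #s)) by ring]
      exact mul_le_mul_of_nonneg_left hmean hL0
    linarith
  calc (#{I ∈ s.powersetCard k | α ≤ ∑ i ∈ I, v i} : ℝ)
      = #{I ∈ s.powersetCard k | α ≤ ∑ i ∈ I, v i} * Real.exp (L * α) * Real.exp (-(L * α)) := by
        rw [mul_assoc, ← Real.exp_add, add_neg_cancel, Real.exp_zero, mul_one]
    _ ≤ (#s).choose k * Real.exp (k * (L * S / #s + (L * B) ^ 2)) * Real.exp (-(L * α)) :=
        mul_le_mul_of_nonneg_right ((card_filter_mul_exp_le_sum_exp _ _ _ hL0).trans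
          (sum_powersetCard_exp_le hL0 hLB k hv)) (Real.exp_pos _).le
    _ ≤ (#s).choose k * Real.exp (-c) := by
        rw [mul_assoc, ← Real.exp_add, ← sub_eq_add_neg]
        gcongr

end SamplingWithoutReplacement

theorem ip_comm (Φ : Matrix (Fin m) (Fin N) ℝ) (i j : Fin N) : ip Φ i j = ip Φ j i :=
  sum_congr rfl fun _ _ => mul_comm _ _

theorem sum_sq_ip_div_le_mu2max (Φ : Matrix (Fin m) (Fin N) ℝ) (j : Fin N) :
    (∑ i ∈ univ.erase j, ip Φ i j ^ 2) / ((N : ℝ) - 1) ≤ mu2max Φ :=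
  le_csSup ((Set.finite_range fun j' : Fin N =>
      (∑ i ∈ univ.erase j', ip Φ i j' ^ 2) / ((N : ℝ) - 1)).bddAbove.mono
    (by rintro _ ⟨j', rfl⟩; exact ⟨j', rfl⟩)) ⟨j, rfl⟩

theorem CoherenceInvariant.mu2bar_eq {Φ : Matrix (Fin m) (Fin N) ℝ} (h : CoherenceInvariant Φ)
    (j : Fin N) : mu2bar Φ = (∑ i ∈ univ.erase j, ip Φ i j ^ 2) / ((N : ℝ) - 1) := by
  have hrow : ∀ i, ∑ x ∈ univ.erase i, ip Φ i x ^ 2 = ∑ x ∈ univ.erase j, ip Φ j x ^ 2 := by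
    intro i
    have := congrArg (fun s => (s.map (· ^ 2)).sum) (h i j)
    simp only [Multiset.map_map, Function.comp_def, sq_abs] at this
    exact this
  have hN : (N : ℝ) ≠ 0 := Nat.cast_ne_zero.2 (Fin.pos j).ne'
  rw [mu2bar, sum_congr rfl fun i _ => hrow i, sum_const, card_univ, Fintype.card_fin,
    nsmul_eq_mul, mul_div_mul_left _ _ hN]
  simp only [ip_comm Φ j]

theorem sum_sq_ip_div_le {Φ : Matrix (Fin m) (Fin N) ℝ} {θ : ℝ}
    (hθ : (CoherenceInvariant Φ ∧ θ = mu2bar Φ) ∨ θ = mu2max Φ) (j : Fin N) :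
    (∑ i ∈ univ.erase j, ip Φ i j ^ 2) / ((N : ℝ) - 1) ≤ θ := by
  rcases hθ with ⟨hΦ, rfl⟩ | rfl
  · exact (hΦ.mu2bar_eq j).ge
  · exact sum_sq_ip_div_le_mu2max Φ j

theorem card_filter_pairsFinset (N k : ℕ) (P : Finset (Fin N) → Fin N → Prop)
    [∀ I j, Decidable (P I j)] :
    #{p ∈ pairsFinset N k | P p.1 p.2} = ∑ j, #{I ∈ (univ.erase j).powersetCard k | P I j} := by
  rw [card_eq_sum_ones, sum_finset_product_right _ univ
    (fun j => {I ∈ (univ.erase j).powersetCard k | P I j})]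
  · simp only [← card_eq_sum_ones]
  · rintro ⟨I, j⟩
    simp only [pairsFinset, mem_filter, mem_product, mem_powersetCard, subset_erase, mem_univ,
      subset_univ]
    tauto

theorem card_pairsFinset (N k : ℕ) : #(pairsFinset N k) = N * (N - 1).choose k := by
  simpa using card_filter_pairsFinset N k fun _ _ => True

theorem card_filter_le_sincSq_le_choose_mul_exp {Φ : Matrix (Fin m) (Fin N) ℝ} {a α μ θ c : ℝ}
    {k : ℕ} (ha1 : a < 1) (hα0 : 0 < α) (hμ : ∀ i j : Fin N, i ≠ j → |ip Φ i j| ≤ μ)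
    (hθ : (CoherenceInvariant Φ ∧ θ = mu2bar Φ) ∨ θ = mu2max Φ) (h2 : k * θ ≤ a * α)
    (hc : 4 * c * k * μ ^ 4 ≤ ((1 - a) * α) ^ 2) (j : Fin N) :
    (#{I ∈ (univ.erase j).powersetCard k | α ≤ sincSq Φ I j} : ℝ) ≤
      (N - 1).choose k * Real.exp (-c) := by
  have hcard : (#(univ.erase j) : ℝ) = N - 1 := by
    rw [card_erase_of_mem (mem_univ j), card_univ, Fintype.card_fin, Nat.cast_sub (Fin.pos j),
      Nat.cast_one]
  have hv : ∀ i ∈ univ.erase j, 0 ≤ ip Φ i j ^ 2 ∧ ip Φ i j ^ 2 ≤ μ ^ 2 := fun i hi =>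
    ⟨sq_nonneg _,
      sq_abs (ip Φ i j) ▸ pow_le_pow_left₀ (abs_nonneg _) (hμ i j (ne_of_mem_erase hi)) 2⟩
  have hmean : k * ((∑ i ∈ univ.erase j, ip Φ i j ^ 2) / #(univ.erase j)) ≤ α - (1 - a) * α := by
    rw [hcard]
    nlinarith [mul_le_mul_of_nonneg_left (sum_sq_ip_div_le hθ j) k.cast_nonneg]
  have := card_filter_le_sum_le_choose_mul_exp hv (mul_pos (sub_pos.2 ha1) hα0) hmean
    (by convert hc using 2; ring)
  rwa [card_erase_of_mem (mem_univ j), card_univ, Fintype.card_fin] at this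

theorem stmt10_general (m N k : ℕ)
    (a β α μ θ : ℝ) (ha1 : a < 1) (hβ : 0 < β)
    (hα0 : 0 < α)
    (Φ : Matrix (Fin m) (Fin N) ℝ)
    (hμ : ∀ i j : Fin N, i ≠ j → |ip Φ i j| ≤ μ)
    (hθ : (CoherenceInvariant Φ ∧ θ = mu2bar Φ) ∨ θ = mu2max Φ)
    (h1 : μ ^ 4 ≤ (1 - a) ^ 2 * α ^ 3 / (32 * β * k))
    (h2 : k * θ ≤ a * α) :
    (((pairsFinset N k).filter fun p => α ≤ sincSq Φ p.1 p.2).card : ℝ) ≤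
      2 * Real.exp (-β / α) * ((pairsFinset N k).card : ℝ) := by
  have hc : 4 * (β / α) * k * μ ^ 4 ≤ ((1 - a) * α) ^ 2 := by
    rcases Nat.eq_zero_or_pos k with rfl | hk
    · simp only [CharP.cast_eq_zero, mul_zero, zero_mul]
      positivity
    · rw [le_div_iff₀ (by positivity)] at h1
      rw [show 4 * (β / α) * k * μ ^ 4 = 4 * β * k * μ ^ 4 / α by ring, div_le_iff₀ hα0]
      nlinarith [pow_pos hα0 3, sq_nonneg (1 - a), pow_nonneg (sq_nonneg μ) 2]
  calc (#{p ∈ pairsFinset N k | α ≤ sincSq Φ p.1 p.2} : ℝ)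
      = ∑ j, (#{I ∈ (univ.erase j).powersetCard k | α ≤ sincSq Φ I j} : ℝ) := by
        rw [card_filter_pairsFinset N k fun I j => α ≤ sincSq Φ I j]; push_cast; rfl
    _ ≤ ∑ _j : Fin N, (N - 1).choose k * Real.exp (-(β / α)) :=
        sum_le_sum fun j _ => card_filter_le_sincSq_le_choose_mul_exp ha1 hα0 hμ hθ h2 hc j
    _ ≤ 2 * Real.exp (-β / α) * #(pairsFinset N k) := by
        rw [sum_const, card_univ, Fintype.card_fin, card_pairsFinset, neg_div, nsmul_eq_mul]
        push_cast
        have hNC : (0 : ℝ) ≤ N * (N - 1).choose k := by positivity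
        nlinarith [mul_nonneg hNC (Real.exp_pos (-(β / α))).le]

/-- Corollary: tail bound for `Σ_l μ_{i_l,j}²` over a random pair. -/
theorem stmt10 (m N k : ℕ) (hk : (k : ℝ) < N / 2 - 1)
    (a β α μ θ : ℝ) (ha0 : 0 < a) (ha1 : a < 1) (hβ : 0 < β)
    (hα0 : 0 < α) (hα1 : α < β * Real.logb 2 (Real.exp 1))
    (Φ : Matrix (Fin m) (Fin N) ℝ) (hcols : unitCols Φ)
    (hμ : ∀ i j : Fin N, i ≠ j → |ip Φ i j| ≤ μ)
    (hθ : (CoherenceInvariant Φ ∧ θ = mu2bar Φ) ∨ θ = mu2max Φ)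
    (h1 : μ ^ 4 ≤ (1 - a) ^ 2 * α ^ 3 / (32 * β * k))
    (h2 : k * θ ≤ a * α) :
    (((pairsFinset N k).filter fun p => α ≤ sincSq Φ p.1 p.2).card : ℝ) ≤
      2 * Real.exp (-β / α) * ((pairsFinset N k).card : ℝ) :=
  stmt10_general m N k a β α μ θ ha1 hβ hα0 Φ hμ hθ h1 h2
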